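/- Bisimulation invariance of the modal μ-calculus fragment: let T = (S, δ) be an LTS and s, s' ∈ S bisimilar states. Then for every closed formula φ of the modal μ-calculus (generated by ⊤, ∨, ¬, ⟨a⟩, variables, and μX.φ with X occurring only positively), s ⊨_T φ iff s' ⊨_T φ. -/
import Mathlib


/-- Formulas of the modal μ-calculus over labels `L`, with variables in ℕ. -/
inductive MF (L : Type) : Type
  | top : MF L
  | or (φ ψ : MF L) : MF L
  | not (φ : MF L) : MF L
  | dia (a : L) (φ : MF L) : MF L
  | var (X : ℕ) : MF L
  | mu (X : ℕ) (φ : MF L) : MF L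

/-- `occNeg X p φ` holds iff X has a free occurrence in φ under an odd number of
negations, when the ambient polarity is p (p = true meaning "already negated"). -/
def occNeg {L : Type} (X : ℕ) : Bool → MF L → Prop
  | _, .top => False
  | p, .or φ ψ => occNeg X p φ ∨ occNeg X p ψ
  | p, .not φ => occNeg X (!p) φ
  | p, .dia _ φ => occNeg X p φ
  | p, .var Y => Y = X ∧ p = true
  | p, .mu Y φ => Y ≠ X ∧ occNeg X p φ

/-- Well-formedness: in every subformula μX.φ, X occurs only positively in φ. -/
def WF {L : Type} : MF L → Prop
  | .top => True
  | .or φ ψ => WF φ ∧ WF ψ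
  | .not φ => WF φ
  | .dia _ φ => WF φ
  | .var _ => True
  | .mu X φ => WF φ ∧ ¬ occNeg X false φ

/-- Free variables. -/
def MF.fv {L : Type} : MF L → Finset ℕ
  | .top => ∅
  | .or φ ψ => φ.fv ∪ ψ.fv
  | .not φ => φ.fv
  | .dia _ φ => φ.fv
  | .var X => {X}
  | .mu X φ => φ.fv \ {X}

/-- Standard semantics of the μ-calculus over an LTS (S, δ): ⟦μX.φ⟧ is the least
(pre)fixed point of A ↦ ⟦φ⟧[X↦A]. -/
def sem {S L : Type} (δ : S → L → S → Prop) : MF L → (ℕ → Set S) → Set S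
  | .top, _ => Set.univ
  | .or φ ψ, ρ => sem δ φ ρ ∪ sem δ ψ ρ
  | .not φ, ρ => (sem δ φ ρ)ᶜ
  | .dia a φ, ρ => {s | ∃ t, δ s a t ∧ t ∈ sem δ φ ρ}
  | .var X, ρ => ρ X
  | .mu X φ, ρ => sInf {A : Set S | sem δ φ (Function.update ρ X A) ⊆ A}

/-- A bisimulation on the LTS (S, δ). -/
def IsBisim {S L : Type} (δ : S → L → S → Prop) (R : S → S → Prop) : Prop :=
  ∀ s s', R s s' →
    (∀ a t, δ s a t → ∃ t', δ s' a t' ∧ R t t') ∧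
    (∀ a t', δ s' a t' → ∃ t, δ s a t ∧ R t t')

lemma sem_mono {S L : Type} (δ : S → L → S → Prop) (X : ℕ) :
    ∀ (φ : MF L) (ρ : ℕ → Set S) (A B : Set S), A ⊆ B →
      (¬ occNeg X false φ → sem δ φ (Function.update ρ X A) ⊆ sem δ φ (Function.update ρ X B)) ∧
      (¬ occNeg X true φ → sem δ φ (Function.update ρ X B) ⊆ sem δ φ (Function.update ρ X A)) := by
  intro φ
  induction φ with
  | top => intro ρ A B hAB; simp [sem]
  | or φ ψ ihφ ihψ =>
      intro ρ A B hAB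
      simp only [occNeg, sem, not_or]
      constructor
      · rintro ⟨h1, h2⟩
        exact Set.union_subset_union ((ihφ ρ A B hAB).1 h1) ((ihψ ρ A B hAB).1 h2)
      · rintro ⟨h1, h2⟩
        exact Set.union_subset_union ((ihφ ρ A B hAB).2 h1) ((ihψ ρ A B hAB).2 h2)
  | not φ ih =>
      intro ρ A B hAB
      simp only [occNeg, sem, Bool.not_false, Bool.not_true]
      exact ⟨fun h => Set.compl_subset_compl.2 ((ih ρ A B hAB).2 h),
             fun h => Set.compl_subset_compl.2 ((ih ρ A B hAB).1 h)⟩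
  | dia a φ ih =>
      intro ρ A B hAB
      simp only [occNeg, sem]
      constructor
      · intro h t ⟨u, hu, hmem⟩; exact ⟨u, hu, (ih ρ A B hAB).1 h hmem⟩
      · intro h t ⟨u, hu, hmem⟩; exact ⟨u, hu, (ih ρ A B hAB).2 h hmem⟩
  | var Y =>
      intro ρ A B hAB
      simp only [occNeg, sem]
      constructor
      · intro _
        by_cases hYX : Y = X
        · subst hYX; simp only [Function.update_self]; exact hAB
        · simp [Function.update_of_ne hYX]
      · intro h
        have hYX : Y ≠ X := by simpa using h
        simp [Function.update_of_ne hYX]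
  | mu Y φ ih =>
      intro ρ A B hAB
      by_cases hYX : Y = X
      · subst hYX
        have : ∀ C : Set S, Function.update (Function.update ρ Y A) Y C =
            Function.update (Function.update ρ Y B) Y C := by
          intro C; simp [Function.update_idem]
        constructor <;> intro _ <;> simp only [sem] <;> simp only [this] <;> exact le_refl _
      · have hcomm : ∀ (C D : Set S), Function.update (Function.update ρ X C) Y D =
            Function.update (Function.update ρ Y D) X C := fun C D =>
          Function.update_comm (fun h => hYX h.symm) _ _ _
        simp only [occNeg, not_and, sem]
        constructor
        · intro h
          have hpos : ¬ occNeg X false φ := h hYX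
          apply sInf_le_sInf
          intro C hC
          simp only [Set.mem_setOf_eq] at hC ⊢
          rw [hcomm]
          exact le_trans ((ih (Function.update ρ Y C) A B hAB).1 hpos) (by rw [← hcomm]; exact hC)
        · intro h
          have hneg : ¬ occNeg X true φ := h hYX
          apply sInf_le_sInf
          intro C hC
          simp only [Set.mem_setOf_eq] at hC ⊢
          rw [hcomm]
          exact le_trans ((ih (Function.update ρ Y C) A B hAB).2 hneg) (by rw [← hcomm]; exact hC)

lemma eqvGen_bisim {S L : Type} (δ : S → L → S → Prop) (R : S → S → Prop)
    (hR : IsBisim δ R) : IsBisim δ (Relation.EqvGen R) := by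
  intro s s' h
  induction h with
  | rel s s' hss' =>
      obtain ⟨h1, h2⟩ := hR s s' hss'
      exact ⟨fun a t ht => (h1 a t ht).imp fun t' ⟨h, hr⟩ => ⟨h, Relation.EqvGen.rel _ _ hr⟩,
             fun a t' ht' => (h2 a t' ht').imp fun t ⟨h, hr⟩ => ⟨h, Relation.EqvGen.rel _ _ hr⟩⟩
  | refl s =>
      exact ⟨fun a t ht => ⟨t, ht, Relation.EqvGen.refl t⟩,
             fun a t ht => ⟨t, ht, Relation.EqvGen.refl t⟩⟩
  | symm s s' _ ih =>
      exact ⟨fun a t ht => (ih.2 a t ht).imp fun t' ⟨h, hr⟩ => ⟨h, Relation.EqvGen.symm _ _ hr⟩,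
             fun a t ht => (ih.1 a t ht).imp fun t' ⟨h, hr⟩ => ⟨h, Relation.EqvGen.symm _ _ hr⟩⟩
  | trans s s' s'' _ _ ih1 ih2 =>
      constructor
      · intro a t ht
        obtain ⟨u, hu, hr⟩ := ih1.1 a t ht
        obtain ⟨v, hv, hr'⟩ := ih2.1 a u hu
        exact ⟨v, hv, Relation.EqvGen.trans _ _ _ hr hr'⟩
      · intro a t ht
        obtain ⟨u, hu, hr⟩ := ih2.2 a t ht
        obtain ⟨v, hv, hr'⟩ := ih1.2 a u hu
        exact ⟨v, hv, Relation.EqvGen.trans _ _ _ hr' hr⟩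

lemma sem_invariant {S L : Type} (δ : S → L → S → Prop) (E : S → S → Prop)
    (hE : IsBisim δ E) (hrefl : ∀ t, E t t) (hsym : ∀ {t u}, E t u → E u t)
    (htrans : ∀ {t u v}, E t u → E u v → E t v) :
    ∀ (φ : MF L), WF φ → ∀ (ρ : ℕ → Set S),
      (∀ X t t', E t t' → (t ∈ ρ X ↔ t' ∈ ρ X)) →
      ∀ t t', E t t' → (t ∈ sem δ φ ρ ↔ t' ∈ sem δ φ ρ) := by
  intro φ
  induction φ with
  | top => intro _ ρ _ t t' _; simp [sem]
  | or φ ψ ihφ ihψ =>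
      intro hwf ρ hρ t t' htt'
      obtain ⟨h1, h2⟩ := hwf
      simp only [sem, Set.mem_union]
      rw [ihφ h1 ρ hρ t t' htt', ihψ h2 ρ hρ t t' htt']
  | not φ ih =>
      intro hwf ρ hρ t t' htt'
      simp only [sem, Set.mem_compl_iff]
      rw [ih hwf ρ hρ t t' htt']
  | dia a φ ih =>
      intro hwf ρ hρ t t' htt'
      simp only [sem, Set.mem_setOf_eq]
      constructor
      · rintro ⟨u, hu, hmem⟩
        obtain ⟨u', hu', huu'⟩ := (hE t t' htt').1 a u hu
        exact ⟨u', hu', (ih hwf ρ hρ u u' huu').1 hmem⟩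
      · rintro ⟨u', hu', hmem⟩
        obtain ⟨u, hu, huu'⟩ := (hE t t' htt').2 a u' hu'
        exact ⟨u, hu, (ih hwf ρ hρ u u' huu').2 hmem⟩
  | var Y => intro _ ρ hρ t t' htt'; exact hρ Y t t' htt'
  | mu X φ ih =>
      intro hwf ρ hρ t t' htt'
      obtain ⟨hwfφ, hpos⟩ := hwf
      set F : Set S → Set S := fun A => sem δ φ (Function.update ρ X A) with hF
      have henv : ∀ (A : Set S), (∀ u u', E u u' → (u ∈ A ↔ u' ∈ A)) →
          ∀ Y u u', E u u' → (u ∈ Function.update ρ X A Y ↔ u' ∈ Function.update ρ X A Y) := by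
        intro A hA Y u u' huu'
        by_cases hYX : Y = X
        · subst hYX; simp only [Function.update_self]; exact hA u u' huu'
        · simp only [Function.update_of_ne hYX]; exact hρ Y u u' huu'
      have hFinv : ∀ (A : Set S), (∀ u u', E u u' → (u ∈ A ↔ u' ∈ A)) →
          ∀ u u', E u u' → (u ∈ F A ↔ u' ∈ F A) :=
        fun A hA => ih hwfφ _ (henv A hA)
      set P : Set (Set S) := {A : Set S | F A ⊆ A} with hP
      set P' : Set (Set S) := {A : Set S | F A ⊆ A ∧ ∀ u u', E u u' → (u ∈ A ↔ u' ∈ A)} with hP'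
      have hMM' : sInf P = sInf P' := by
        apply le_antisymm
        · exact sInf_le_sInf (fun A hA => hA.1)
        · apply le_sInf
          intro A hA
          set A' : Set S := {u | ∀ v, E u v → v ∈ A} with hA'
          have hsub : A' ⊆ A := fun u hu => hu u (hrefl u)
          have hinv : ∀ u u', E u u' → (u ∈ A' ↔ u' ∈ A') := by
            intro u u' huu'
            constructor
            · intro h v hv; exact h v (htrans huu' hv)
            · intro h v hv; exact h v (htrans (hsym huu') hv)
          have hFA' : F A' ⊆ A := by
            refine le_trans ?_ hA
            have := (sem_mono δ X φ ρ A' A hsub).1 hpos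
            exact this
          have hpre : F A' ⊆ A' := by
            intro u hu v huv
            exact hFA' ((hFinv A' hinv u v huv).1 hu)
          exact le_trans (sInf_le ⟨hpre, hinv⟩) hsub
      simp only [sem]
      rw [show {A : Set S | sem δ φ (Function.update ρ X A) ⊆ A} = P from rfl, hMM']
      simp only [Set.sInf_eq_sInter, Set.mem_sInter]
      constructor
      · intro h A hA; exact (hA.2 t t' htt').1 (h A hA)
      · intro h A hA; exact (hA.2 t t' htt').2 (h A hA)

/-- bisimulation invariance of the modal μ-calculus: if s and s'
are bisimilar states of an LTS (S, δ), then for every closed well-formed μ-calculus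
formula φ, s ⊨ φ iff s' ⊨ φ. -/
theorem mucalc_bisim_invariant {S L : Type} (δ : S → L → S → Prop)
    (R : S → S → Prop) (hR : IsBisim δ R) (s s' : S) (hss' : R s s')
    (φ : MF L) (hwf : WF φ) (hclosed : φ.fv = ∅) :
    s ∈ sem δ φ (fun _ => ∅) ↔ s' ∈ sem δ φ (fun _ => ∅) := by
  have hEq := Relation.EqvGen.is_equivalence R
  exact sem_invariant δ (Relation.EqvGen R) (eqvGen_bisim δ R hR) hEq.refl
    (fun h => hEq.symm h) (fun h h' => hEq.trans h h') φ hwf _ (by simp) s s'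
    (Relation.EqvGen.rel s s' hss')
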